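/- Let k : (0,∞)² → ℂ be a measurable function and a > 0 a constant with C := ∫₀^∞ ∫₀^∞ |e^{−as} k(s, u)|² ds du < ∞. Let w ∈ ℂ with Re w > a. Then the function h(x) = ∫₀ˣ e^{−sw} k(s, x − s) ds is well defined for almost every x > 0, belongs to L²(0,∞), and satisfies ‖h‖²_{L²(0,∞)} ≤ C / (2(Re w − a)). -/

import Mathlib

/-!
Pointwise, `|e^{-sw} k(s,u)| = e^{-(Re w - a)s} |e^{-as} k(s,u)|`, so Cauchy–Schwarz on `(0,x)`
gives `|h(x)|² ≤ G(x) ∫₀^∞ e^{-2(Re w - a)s} ds = G(x) / (2(Re w - a))` with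
`G(x) = ∫₀ˣ |e^{-as} k(s, x-s)|² ds`. Tonelli and the substitution `u = x - s` give
`∫₀^∞ G = C`; in particular `G(x) < ∞` for a.e. `x`, which is what makes `h(x)` well defined.
-/

open MeasureTheory Set
open scoped ENNReal NNReal

theorem setLIntegral_Ioi_comp_sub (s : ℝ) (g : ℝ → ℝ≥0∞) :
    ∫⁻ x in Ioi s, g (x - s) = ∫⁻ u in Ioi 0, g u := by
  have h := (measurePreserving_add_right (volume : Measure ℝ) s).setLIntegral_comp_emb
    (measurableEmbedding_addRight s) (fun x => g (x - s)) (Ioi 0)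
  rw [image_add_const_Ioi, zero_add] at h
  simpa using h.symm

theorem lintegral_Ioi_lintegral_Ioo_sub {f : ℝ → ℝ → ℝ≥0∞}
    (hf : Measurable (Function.uncurry f)) :
    ∫⁻ x in Ioi 0, ∫⁻ s in Ioo 0 x, f s (x - s) = ∫⁻ s in Ioi 0, ∫⁻ u in Ioi 0, f s u := by
  set φ : ℝ × ℝ → ℝ≥0∞ := {p | p.2 < p.1}.indicator fun p => f p.2 (p.1 - p.2)
  have hφ : Measurable φ :=
    (hf.comp (measurable_snd.prodMk (measurable_fst.sub measurable_snd))).indicator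
      (measurableSet_lt measurable_snd measurable_fst)
  have inner_s (x : ℝ) : ∫⁻ s in Ioo 0 x, f s (x - s) = ∫⁻ s in Ioi 0, φ (x, s) := by
    rw [← Ioi_inter_Iio, inter_comm, ← Measure.restrict_restrict measurableSet_Iio,
      ← lintegral_indicator measurableSet_Iio]
    rfl
  have inner_x (s : ℝ) (hs : s ∈ Ioi 0) : ∫⁻ x in Ioi 0, φ (x, s) = ∫⁻ u in Ioi 0, f s u := by
    have hsub : Ioi s ⊆ Ioi 0 := Ioi_subset_Ioi (le_of_lt hs)
    rw [← setLIntegral_Ioi_comp_sub s (f s), ← inter_eq_left.mpr hsub,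
      ← Measure.restrict_restrict measurableSet_Ioi,
      ← lintegral_indicator (measurableSet_Ioi (a := s))]
    rfl
  calc ∫⁻ x in Ioi 0, ∫⁻ s in Ioo 0 x, f s (x - s)
      = ∫⁻ x in Ioi 0, ∫⁻ s in Ioi 0, φ (x, s) := by simp_rw [inner_s]
    _ = ∫⁻ s in Ioi 0, ∫⁻ x in Ioi 0, φ (x, s) := lintegral_lintegral_swap hφ.aemeasurable
    _ = ∫⁻ s in Ioi 0, ∫⁻ u in Ioi 0, f s u := setLIntegral_congr_fun measurableSet_Ioi inner_x

theorem ENNReal.sq_lintegral_mul_le {α : Type*} [MeasurableSpace α] {μ : Measure α}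
    {f g : α → ℝ≥0∞} (hf : AEMeasurable f μ) (hg : AEMeasurable g μ) :
    (∫⁻ a, f a * g a ∂μ) ^ 2 ≤ (∫⁻ a, f a ^ 2 ∂μ) * ∫⁻ a, g a ^ 2 ∂μ := by
  have h := ENNReal.lintegral_mul_le_Lp_mul_Lq μ Real.HolderConjugate.two_two hf hg
  simp only [Pi.mul_apply, ENNReal.rpow_two] at h
  calc (∫⁻ a, f a * g a ∂μ) ^ 2
      ≤ ((∫⁻ a, f a ^ 2 ∂μ) ^ (1 / 2 : ℝ) * (∫⁻ a, g a ^ 2 ∂μ) ^ (1 / 2 : ℝ)) ^ 2 :=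
        pow_le_pow_left' h 2
    _ = (∫⁻ a, f a ^ 2 ∂μ) * ∫⁻ a, g a ^ 2 ∂μ := by
        rw [mul_pow, ← ENNReal.rpow_two, ← ENNReal.rpow_two, ← ENNReal.rpow_mul,
          ← ENNReal.rpow_mul]
        norm_num

theorem lintegral_Ioi_ofReal_exp_neg_mul {c : ℝ} (hc : 0 < c) :
    ∫⁻ s in Ioi 0, ENNReal.ofReal (Real.exp (-(c * s))) = ENNReal.ofReal (1 / c) := by
  simp_rw [← neg_mul]
  rw [← ofReal_integral_eq_lintegral_ofReal (exp_neg_integrableOn_Ioi 0 hc)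
    (.of_forall fun s => (Real.exp_pos _).le), integral_exp_mul_Ioi (neg_lt_zero.mpr hc) 0]
  simp [neg_div]

theorem sq_setLIntegral_ofReal_exp_neg_mul_le {b : ℝ} (hb : 0 < b) {t : Set ℝ}
    (ht : t ⊆ Ioi 0) {g : ℝ → ℝ≥0∞} (hg : AEMeasurable g (volume.restrict t)) :
    (∫⁻ s in t, ENNReal.ofReal (Real.exp (-(b * s))) * g s) ^ 2
      ≤ ENNReal.ofReal (1 / (2 * b)) * ∫⁻ s in t, g s ^ 2 := by
  refine (ENNReal.sq_lintegral_mul_le (by fun_prop) hg).trans (mul_le_mul_left ?_ _)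
  calc ∫⁻ s in t, ENNReal.ofReal (Real.exp (-(b * s))) ^ 2
      = ∫⁻ s in t, ENNReal.ofReal (Real.exp (-(2 * b * s))) := by
        congr! 2 with s
        rw [← ENNReal.ofReal_pow (Real.exp_nonneg _), ← Real.exp_nat_mul]
        ring_nf
    _ ≤ ∫⁻ s in Ioi 0, ENNReal.ofReal (Real.exp (-(2 * b * s))) := lintegral_mono_set ht
    _ = ENNReal.ofReal (1 / (2 * b)) := lintegral_Ioi_ofReal_exp_neg_mul (by positivity)

theorem enorm_cexp_neg_mul_mul (a s : ℝ) (w z : ℂ) :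
    ‖Complex.exp (-(s * w)) * z‖ₑ
      = ENNReal.ofReal (Real.exp (-((w.re - a) * s))) * ‖(Real.exp (-(a * s)) : ℂ) * z‖ₑ := by
  rw [← ofReal_norm, ← ofReal_norm, ← ENNReal.ofReal_mul (Real.exp_nonneg _), norm_mul, norm_mul,
    Complex.norm_exp, Complex.norm_real, Real.norm_of_nonneg (Real.exp_nonneg _), ← mul_assoc,
    ← Real.exp_add]
  congr 3
  simp only [Complex.neg_re, Complex.re_ofReal_mul]
  ring

theorem measurableSet_snd_mem_Ioo_zero_fst : MeasurableSet {p : ℝ × ℝ | p.2 ∈ Ioo 0 p.1} :=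
  (measurableSet_lt measurable_const measurable_snd).inter
    (measurableSet_lt measurable_snd measurable_fst)

theorem Measurable.setLIntegral_Ioo_zero {F : ℝ → ℝ → ℝ≥0∞}
    (hF : Measurable (Function.uncurry F)) : Measurable fun x => ∫⁻ s in Ioo 0 x, F x s := by
  simp_rw [← lintegral_indicator measurableSet_Ioo]
  exact (hF.indicator measurableSet_snd_mem_Ioo_zero_fst).lintegral_prod_right'

theorem StronglyMeasurable.setIntegral_Ioo_zero {E : Type*} [NormedAddCommGroup E]
    [NormedSpace ℝ E] {F : ℝ → ℝ → E} (hF : StronglyMeasurable (Function.uncurry F)) :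
    StronglyMeasurable fun x => ∫ s in Ioo 0 x, F x s := by
  simp_rw [← integral_indicator measurableSet_Ioo]
  exact (hF.indicator measurableSet_snd_mem_Ioo_zero_fst).integral_prod_right'

theorem memLp_two_and_integral_norm_sq_le {α E : Type*} [MeasurableSpace α] {μ : Measure α}
    [NormedAddCommGroup E] {f : α → E} (hf : AEStronglyMeasurable f μ) {M : ℝ} (hM : 0 ≤ M)
    (h : ∫⁻ x, ‖f x‖ₑ ^ 2 ∂μ ≤ ENNReal.ofReal M) :
    MemLp f 2 μ ∧ ∫ x, ‖f x‖ ^ 2 ∂μ ≤ M := by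
  refine ⟨⟨hf, ?_⟩, ?_⟩
  · rw [eLpNorm_lt_top_iff_lintegral_rpow_enorm_lt_top two_ne_zero ENNReal.ofNat_ne_top]
    simpa using h.trans_lt ENNReal.ofReal_lt_top
  · rw [integral_eq_lintegral_of_nonneg_ae (.of_forall fun x => by positivity) (by fun_prop)]
    refine ENNReal.toReal_le_of_le_ofReal hM (le_of_eq_of_le ?_ h)
    congr! 2 with x
    rw [ENNReal.ofReal_pow (norm_nonneg _), ofReal_norm]

section ExpWeightedVolterra

variable {k : ℝ → ℝ → ℂ} {a : ℝ} {w : ℂ}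

theorem sq_lintegral_enorm_cexp_mul_le (hk : Measurable (Function.uncurry k)) (hw : a < w.re)
    (x : ℝ) :
    (∫⁻ s in Ioo (0 : ℝ) x, ‖Complex.exp (-((s : ℂ) * w)) * k s (x - s)‖ₑ) ^ 2
      ≤ ENNReal.ofReal (1 / (2 * (w.re - a)))
        * ∫⁻ s in Ioo 0 x, ‖(Real.exp (-(a * s)) : ℂ) * k s (x - s)‖ₑ ^ 2 := by
  simp_rw [enorm_cexp_neg_mul_mul a]
  exact sq_setLIntegral_ofReal_exp_neg_mul_le (sub_pos.mpr hw) Ioo_subset_Ioi_self (by fun_prop)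

theorem lintegral_enorm_sq_setIntegral_cexp_mul_le (hk : Measurable (Function.uncurry k))
    (hw : a < w.re) :
    ∫⁻ x in Ioi 0, ‖∫ s in Ioo (0 : ℝ) x, Complex.exp (-((s : ℂ) * w)) * k s (x - s)‖ₑ ^ 2
      ≤ ENNReal.ofReal (1 / (2 * (w.re - a)))
        * ∫⁻ s in Ioi 0, ∫⁻ u in Ioi 0, ‖(Real.exp (-(a * s)) : ℂ) * k s u‖ₑ ^ 2 := by
  rw [← lintegral_Ioi_lintegral_Ioo_sub (f := fun s u => ‖(Real.exp (-(a * s)) : ℂ) * k s u‖ₑ ^ 2)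
    (by fun_prop), ← lintegral_const_mul _ (Measurable.setLIntegral_Ioo_zero (by fun_prop))]
  exact lintegral_mono fun x =>
    (pow_le_pow_left' (enorm_integral_le_lintegral_enorm _) 2).trans
      (sq_lintegral_enorm_cexp_mul_le hk hw x)

theorem ae_integrableOn_cexp_mul (hk : Measurable (Function.uncurry k)) (hw : a < w.re)
    (hfin : ∫⁻ s in Ioi 0, ∫⁻ u in Ioi 0, ‖(Real.exp (-(a * s)) : ℂ) * k s u‖ₑ ^ 2 ≠ ∞) :
    ∀ᵐ x ∂volume.restrict (Ioi 0),
      IntegrableOn (fun s : ℝ => Complex.exp (-((s : ℂ) * w)) * k s (x - s)) (Ioo 0 x) := by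
  set G : ℝ → ℝ≥0∞ := fun x => ∫⁻ s in Ioo 0 x, ‖(Real.exp (-(a * s)) : ℂ) * k s (x - s)‖ₑ ^ 2
  have hG : ∫⁻ x in Ioi 0, G x ≠ ∞ :=
    (lintegral_Ioi_lintegral_Ioo_sub (by fun_prop)).trans_ne hfin
  filter_upwards [ae_lt_top (Measurable.setLIntegral_Ioo_zero (by fun_prop)) hG] with x hx
  refine ⟨by fun_prop, ?_⟩
  have hsq := (sq_lintegral_enorm_cexp_mul_le hk hw x).trans_lt
    (ENNReal.mul_lt_top ENNReal.ofReal_lt_top hx)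
  exact (ENNReal.pow_lt_top_iff.mp hsq).resolve_right two_ne_zero

end ExpWeightedVolterra

theorem stmt_16_general (k : ℝ → ℝ → ℂ) (hk : Measurable fun p : ℝ × ℝ => k p.1 p.2)
    (a : ℝ) (C : ℝ) (hC0 : 0 ≤ C)
    (hC : (∫⁻ s in Set.Ioi (0 : ℝ), ∫⁻ u in Set.Ioi (0 : ℝ),
        (‖(Real.exp (-(a * s)) : ℂ) * k s u‖₊ : ℝ≥0∞) ^ 2) = ENNReal.ofReal C)
    (w : ℂ) (hw : a < w.re) :
    (∀ᵐ x ∂volume.restrict (Set.Ioi (0 : ℝ)),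
        IntegrableOn (fun s : ℝ => Complex.exp (-((s : ℂ) * w)) * k s (x - s))
          (Set.Ioo 0 x) volume) ∧
    MemLp (fun x : ℝ => ∫ s in Set.Ioo (0 : ℝ) x, Complex.exp (-((s : ℂ) * w)) * k s (x - s))
      2 (volume.restrict (Set.Ioi (0 : ℝ))) ∧
    (∫ x in Set.Ioi (0 : ℝ),
        ‖∫ s in Set.Ioo (0 : ℝ) x, Complex.exp (-((s : ℂ) * w)) * k s (x - s)‖ ^ 2)
      ≤ C / (2 * (w.re - a)) := by
  have hb : 0 < w.re - a := sub_pos.mpr hw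
  have hC' : ∫⁻ s in Ioi 0, ∫⁻ u in Ioi 0, ‖(Real.exp (-(a * s)) : ℂ) * k s u‖ₑ ^ 2
      = ENNReal.ofReal C := hC
  have hL2 := lintegral_enorm_sq_setIntegral_cexp_mul_le hk hw
  rw [hC', ← ENNReal.ofReal_mul (by positivity), one_div_mul_eq_div] at hL2
  have hmeas : StronglyMeasurable fun x : ℝ =>
      ∫ s in Ioo (0 : ℝ) x, Complex.exp (-((s : ℂ) * w)) * k s (x - s) :=
    StronglyMeasurable.setIntegral_Ioo_zero
      (F := fun x s => Complex.exp (-((s : ℂ) * w)) * k s (x - s)) (by fun_prop)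
  exact ⟨ae_integrableOn_cexp_mul hk hw (hC' ▸ ENNReal.ofReal_ne_top),
    memLp_two_and_integral_norm_sq_le hmeas.aestronglyMeasurable (by positivity) hL2⟩

/-- Let `k` be measurable on `(0,∞)²` with `C = ∫∫ |e^{-as} k(s,u)|² ds du < ∞` and let
`w ∈ ℂ` with `Re w > a`. Then `h(x) = ∫₀ˣ e^{-sw} k(s, x-s) ds` is well defined for a.e.
`x > 0`, belongs to `L²(0,∞)`, and `‖h‖² ≤ C / (2 (Re w - a))`. -/
theorem stmt_16 (k : ℝ → ℝ → ℂ) (hk : Measurable fun p : ℝ × ℝ => k p.1 p.2)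
    (a : ℝ) (ha : 0 < a) (C : ℝ) (hC0 : 0 ≤ C)
    (hC : (∫⁻ s in Set.Ioi (0 : ℝ), ∫⁻ u in Set.Ioi (0 : ℝ),
        (‖(Real.exp (-(a * s)) : ℂ) * k s u‖₊ : ℝ≥0∞) ^ 2) = ENNReal.ofReal C)
    (w : ℂ) (hw : a < w.re) :
    (∀ᵐ x ∂volume.restrict (Set.Ioi (0 : ℝ)),
        IntegrableOn (fun s : ℝ => Complex.exp (-((s : ℂ) * w)) * k s (x - s))
          (Set.Ioo 0 x) volume) ∧
    MemLp (fun x : ℝ => ∫ s in Set.Ioo (0 : ℝ) x, Complex.exp (-((s : ℂ) * w)) * k s (x - s))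
      2 (volume.restrict (Set.Ioi (0 : ℝ))) ∧
    (∫ x in Set.Ioi (0 : ℝ),
        ‖∫ s in Set.Ioo (0 : ℝ) x, Complex.exp (-((s : ℂ) * w)) * k s (x - s)‖ ^ 2)
      ≤ C / (2 * (w.re - a)) :=
  stmt_16_general k hk a C hC0 hC w hw
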